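/- Let n ≥ 2 and λ₁ ≥ … ≥ λ_{n-1} > 0 > λₙ with θ(λ) = ∑ᵢ arctan(λᵢ) satisfying (n-2)·π/2 < θ(λ) < (n-1)·π/2. Then with T = tan((n-1)·π/2 - θ(λ)) > 0, one has 1 + T·∑ᵢ 1/λᵢ ≤ 0. -/
import Mathlib


open Real Finset

lemma aux_ne_odd (x : ℝ) (h1 : -(π / 2) < x) (h2 : x < π / 2) (k : ℤ) :
    x ≠ (2 * k + 1) * π / 2 := by
  intro hk
  rcases le_or_gt 0 k with h | h
  · have hk' : (0 : ℝ) ≤ (k : ℝ) := by exact_mod_cast h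
    nlinarith [pi_pos]
  · have hk' : (k : ℝ) ≤ -1 := by exact_mod_cast Int.le_sub_one_of_lt h
    nlinarith [pi_pos]

lemma tan_two_step {a b : ℝ} (ha : 0 ≤ a) (hb : 0 ≤ b) (hab : a + b < π / 2) :
    Real.tan a * Real.tan b < 1 ∧ Real.tan a + Real.tan b ≤ Real.tan (a + b) := by
  have hpi : 0 < π := pi_pos
  have ha2 : a < π / 2 := by linarith
  have hb2 : b < π / 2 := by linarith
  have htu : Real.tan a * Real.tan b < 1 := by
    rcases eq_or_lt_of_le hb with hb0 | hb0
    · simp [← hb0]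
    · have htb : 0 < Real.tan b := tan_pos_of_pos_of_lt_pi_div_two hb0 hb2
      have hlt : Real.tan a < Real.tan (π / 2 - b) :=
        tan_lt_tan_of_nonneg_of_lt_pi_div_two ha (by linarith) (by linarith)
      rw [Real.tan_pi_div_two_sub, inv_eq_one_div, lt_div_iff₀ htb] at hlt
      exact hlt
  have hadd : Real.tan (a + b) =
      (Real.tan a + Real.tan b) / (1 - Real.tan a * Real.tan b) :=
    Real.tan_add' ⟨aux_ne_odd a (by linarith) ha2, aux_ne_odd b (by linarith) hb2⟩
  refine ⟨htu, ?_⟩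
  have hT : 0 ≤ Real.tan (a + b) :=
    tan_nonneg_of_nonneg_of_le_pi_div_two (by linarith) (by linarith)
  have h1tu : 0 < 1 - Real.tan a * Real.tan b := by linarith
  have hkey : Real.tan a + Real.tan b = Real.tan (a + b) * (1 - Real.tan a * Real.tan b) := by
    rw [hadd]; field_simp
  have h0ab : 0 ≤ Real.tan a * Real.tan b :=
    mul_nonneg (tan_nonneg_of_nonneg_of_le_pi_div_two ha ha2.le)
      (tan_nonneg_of_nonneg_of_le_pi_div_two hb hb2.le)
  nlinarith [mul_nonneg hT h0ab]

lemma tan_sum_ge (m : ℕ) (y : Fin m → ℝ) (h0 : ∀ i, 0 ≤ y i) (hs : ∑ i, y i < π / 2) :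
    ∑ i, Real.tan (y i) ≤ Real.tan (∑ i, y i) := by
  induction m with
  | zero => simp
  | succ m ih =>
    rw [Fin.sum_univ_castSucc] at hs ⊢
    rw [Fin.sum_univ_castSucc]
    have hA0 : 0 ≤ ∑ i : Fin m, y i.castSucc :=
      Finset.sum_nonneg fun i _ => h0 _
    have hlast := h0 (Fin.last m)
    have hAs : ∑ i : Fin m, y i.castSucc < π / 2 := by linarith
    have ihh := ih (fun i => y i.castSucc) (fun i => h0 _) hAs
    have step := (tan_two_step hA0 hlast hs).2
    linarith

theorem case_two_inequality (n : ℕ) (hn : 2 ≤ n) (lam : Fin n → ℝ)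
    (hmono : Antitone lam)
    (hpos : ∀ i : Fin n, (i : ℕ) < n - 1 → 0 < lam i)
    (hneg : lam ⟨n - 1, by omega⟩ < 0)
    (h1 : ((n : ℝ) - 2) * (π / 2) < ∑ i, Real.arctan (lam i))
    (h2 : ∑ i, Real.arctan (lam i) < ((n : ℝ) - 1) * (π / 2)) :
    0 < Real.tan (((n : ℝ) - 1) * (π / 2) - ∑ i, Real.arctan (lam i)) ∧
    1 + Real.tan (((n : ℝ) - 1) * (π / 2) - ∑ i, Real.arctan (lam i))
        * ∑ i, 1 / lam i ≤ 0 := by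
  obtain ⟨m, rfl⟩ : ∃ m, n = m + 1 := ⟨n - 1, by omega⟩
  have hpi : 0 < π := pi_pos
  have hneg' : lam (Fin.last m) < 0 := hneg
  have hlampos : ∀ i : Fin m, 0 < lam i.castSucc := fun i =>
    hpos i.castSucc (by simpa using i.isLt)
  -- the substituted variables
  set y : Fin m → ℝ := fun i => π / 2 - Real.arctan (lam i.castSucc) with hy
  set z : ℝ := -Real.arctan (lam (Fin.last m)) with hz
  have hz0 : 0 < z := by
    have : Real.arctan (lam (Fin.last m)) < Real.arctan 0 := arctan_strictMono hneg'
    simpa [hz] using this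
  have hz2 : z < π / 2 := by
    have := neg_pi_div_two_lt_arctan (lam (Fin.last m))
    simp only [hz]; linarith
  have hy0 : ∀ i, 0 ≤ y i := fun i => by
    have := arctan_lt_pi_div_two (lam i.castSucc)
    simp only [hy]; linarith
  -- split the arctan sum
  have hsplit : ∑ i, Real.arctan (lam i) =
      ∑ i : Fin m, Real.arctan (lam i.castSucc) + Real.arctan (lam (Fin.last m)) :=
    Fin.sum_univ_castSucc _
  have hsumy : ∑ i, y i = m * (π / 2) - ∑ i : Fin m, Real.arctan (lam i.castSucc) := by
    simp [hy, Finset.sum_sub_distrib, mul_comm]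
  have hW : ((m + 1 : ℕ) : ℝ) * (π / 2) - (π / 2) - ∑ i, Real.arctan (lam i)
      = (∑ i, y i) + z := by
    rw [hsplit, hsumy, hz]; push_cast; ring
  have hWeq : (((m + 1 : ℕ) : ℝ) - 1) * (π / 2) - ∑ i, Real.arctan (lam i)
      = (∑ i, y i) + z := by rw [← hW]; ring
  set A := ∑ i, y i with hA
  have hA0 : 0 ≤ A := Finset.sum_nonneg fun i _ => hy0 i
  have hWpos : 0 < A + z := by
    rw [← hWeq]; push_cast; nlinarith
  have hWlt : A + z < π / 2 := by
    have : (((m + 1 : ℕ) : ℝ) - 1) * (π / 2) - ∑ i, Real.arctan (lam i) < π / 2 := by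
      push_cast; nlinarith
    linarith [hWeq ▸ this]
  have hAlt : A < π / 2 := by linarith
  -- tangent facts
  set t := Real.tan A with ht
  set u := Real.tan z with hu
  have hupos : 0 < u := tan_pos_of_pos_of_lt_pi_div_two hz0 hz2
  have ht0 : 0 ≤ t := tan_nonneg_of_nonneg_of_le_pi_div_two hA0 (le_of_lt hAlt)
  have hulam : u = -lam (Fin.last m) := by
    rw [hu, hz, Real.tan_neg, Real.tan_arctan]
  obtain ⟨htu, -⟩ := tan_two_step hA0 (le_of_lt hz0) hWlt
  have hTeq : Real.tan (A + z) = (t + u) / (1 - t * u) :=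
    Real.tan_add' ⟨aux_ne_odd A (by linarith) hAlt, aux_ne_odd z (by linarith) hz2⟩
  have hTpos : 0 < Real.tan (A + z) := tan_pos_of_pos_of_lt_pi_div_two hWpos hWlt
  -- sum of reciprocals
  have hrec : ∀ i : Fin m, 1 / lam i.castSucc = Real.tan (y i) := fun i => by
    rw [hy]
    simp only
    rw [Real.tan_pi_div_two_sub, Real.tan_arctan, one_div]
  have hsumrec : ∑ i, 1 / lam i ≤ t - 1 / u := by
    rw [Fin.sum_univ_castSucc (f := fun i => 1 / lam i)]
    have h1 : ∑ i : Fin m, 1 / lam i.castSucc ≤ t := by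
      rw [Finset.sum_congr rfl fun i _ => hrec i]
      exact tan_sum_ge m y hy0 hAlt
    have h2 : 1 / lam (Fin.last m) = -(1 / u) := by
      rw [hulam]; field_simp
    rw [h2]; linarith
  have h1tu : 0 < 1 - t * u := by linarith
  -- key algebraic identity
  have hkey : Real.tan (A + z) * (t - 1 / u) = -(t / u + 1) := by
    rw [hTeq]
    field_simp
    ring
  have htudiv : 0 ≤ t / u := div_nonneg ht0 (le_of_lt hupos)
  have hmul : Real.tan (A + z) * ∑ i, 1 / lam i ≤ Real.tan (A + z) * (t - 1 / u) :=
    mul_le_mul_of_nonneg_left hsumrec (le_of_lt hTpos)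
  constructor
  · rw [hWeq]; exact hTpos
  · rw [hWeq]
    have : Real.tan (A + z) * ∑ i, 1 / lam i ≤ -(t / u + 1) := by rw [← hkey]; exact hmul
    linarith
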